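/- Let N ≥ 1, let b be a nonzero real number, and let n : {1,…,N} → ℕ be a multi-index with n ≠ 0. Define the entire function F : ℂ^N → ℂ by F(z) = exp(−b·∏_{j=1}^N z_j^{2n_j}). Then F violates every Paley–Wiener bound: for all constants C > 0, M ≥ 0 and L ≥ 0 there exists z ∈ ℂ^N such that |F(z)| > C·(1 + ‖z‖)^M · exp(L·∑_{j=1}^N |Im z_j|). (Consequently, the inverse Fourier transform of k ↦ exp(−b·k^{2n}) cannot be a distribution of compact support.) -/

import Mathlib

/-!
Take `z = t • w` with `|w_j| = 1` and the phase of one coordinate of `w` chosen so that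
`-b ∏ w_j^{2n_j} = |b|`. Along this ray `|F(t w)| = exp (|b| t^{2|n|})` with `2|n| ≥ 2`, while the
Paley–Wiener majorant is at most `C (1 + √N t)^M exp (L N t)`, i.e. only exponential in `t`.
-/

open Finset

theorem Complex.exists_norm_eq_one_pow_eq {c : ℂ} (hc : ‖c‖ = 1) {m : ℕ} (hm : m ≠ 0) :
    ∃ ω : ℂ, ‖ω‖ = 1 ∧ ω ^ m = c := by
  obtain ⟨ω, hω⟩ := IsAlgClosed.exists_pow_nat_eq c (Nat.pos_of_ne_zero hm)
  refine ⟨ω, (pow_eq_one_iff_of_nonneg (norm_nonneg ω) hm).1 ?_, hω⟩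
  rw [← norm_pow, hω, hc]

theorem Complex.exists_norm_eq_one_prod_pow_eq {ι : Type*} [Fintype ι] {e : ι → ℕ} (he : e ≠ 0)
    {c : ℂ} (hc : ‖c‖ = 1) : ∃ w : ι → ℂ, (∀ j, ‖w j‖ = 1) ∧ ∏ j, w j ^ e j = c := by
  classical
  obtain ⟨j₀, hj₀⟩ := Function.ne_iff.1 he
  obtain ⟨ω, hω, hωc⟩ := Complex.exists_norm_eq_one_pow_eq hc hj₀
  refine ⟨Function.update 1 j₀ ω, fun j => ?_, ?_⟩
  · rcases eq_or_ne j j₀ with rfl | h <;> simp [*]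
  · rw [Fintype.prod_eq_single j₀ fun j hj => by simp [hj]]
    simp [hωc]

theorem EuclideanSpace.norm_eq_sqrt_card_mul {ι 𝕜 : Type*} [Fintype ι] [RCLike 𝕜]
    {x : EuclideanSpace 𝕜 ι} {t : ℝ} (ht : 0 ≤ t) (hx : ∀ j, ‖x j‖ = t) :
    ‖x‖ = √(Fintype.card ι) * t := by
  rw [EuclideanSpace.norm_eq]
  simp [hx, Real.sqrt_sq ht]

theorem exists_add_mul_lt_mul_pow (a B : ℝ) {β : ℝ} (hβ : 0 < β) {k : ℕ} (hk : 2 ≤ k) :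
    ∃ t : ℝ, 0 ≤ t ∧ a + B * t < β * t ^ k := by
  set t := max 1 ((|a| + |B| + 1) / β)
  have ht : 1 ≤ t := le_max_left _ _
  have hβt : |a| + |B| + 1 ≤ β * t := (div_le_iff₀' hβ).1 (le_max_right _ _)
  have ht₀ : 0 ≤ t := by positivity
  refine ⟨t, ht₀, ?_⟩
  calc a + B * t ≤ |a| + |B| * t :=
        add_le_add (le_abs_self a) (mul_le_mul_of_nonneg_right (le_abs_self B) ht₀)
    _ < (|a| + |B| + 1) * t := by nlinarith [abs_nonneg a]
    _ ≤ β * t * t := mul_le_mul_of_nonneg_right hβt ht₀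
    _ = β * t ^ 2 := by ring
    _ ≤ β * t ^ k := by gcongr

theorem exists_mul_rpow_mul_exp_lt_exp_mul_pow {C M p : ℝ} (hC : 0 < C) (hM : 0 ≤ M)
    (hp : 0 ≤ p) (q : ℝ) {β : ℝ} (hβ : 0 < β) {k : ℕ} (hk : 2 ≤ k) :
    ∃ t : ℝ, 0 ≤ t ∧ C * (1 + p * t) ^ M * Real.exp (q * t) < Real.exp (β * t ^ k) := by
  obtain ⟨t, ht, hlt⟩ := exists_add_mul_lt_mul_pow (Real.log C) (M * p + q) hβ hk
  refine ⟨t, ht, ?_⟩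
  have hpow : (1 + p * t) ^ M ≤ Real.exp (p * t * M) := by
    rw [Real.exp_mul]
    exact Real.rpow_le_rpow (by positivity) (by linarith [Real.add_one_le_exp (p * t)]) hM
  calc C * (1 + p * t) ^ M * Real.exp (q * t)
      ≤ Real.exp (Real.log C) * Real.exp (p * t * M) * Real.exp (q * t) := by
        rw [Real.exp_log hC]; gcongr
    _ = Real.exp (Real.log C + (M * p + q) * t) := by
        rw [← Real.exp_add, ← Real.exp_add]; ring_nf
    _ < Real.exp (β * t ^ k) := Real.exp_lt_exp.2 hlt

theorem stmt_4 (N : ℕ) (b : ℝ) (hb : b ≠ 0)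
    (n : Fin N → ℕ) (hn : n ≠ 0) :
    ∀ C M L : ℝ, 0 < C → 0 ≤ M → 0 ≤ L →
      ∃ z : EuclideanSpace ℂ (Fin N),
        ‖Complex.exp (-(b : ℂ) * ∏ j : Fin N, z j ^ (2 * n j))‖ >
          C * (1 + ‖z‖) ^ M * Real.exp (L * ∑ j : Fin N, |(z j).im|) := by
  intro C M L hC hM hL
  have h2n : (fun j => 2 * n j) ≠ 0 := fun h => hn (funext fun j => by simpa using congrFun h j)
  obtain ⟨w, hw, hwprod⟩ := Complex.exists_norm_eq_one_prod_pow_eq h2n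
    (c := -((|b| / b : ℝ) : ℂ)) (by simp [hb])
  have hk : 2 ≤ ∑ j, 2 * n j := by
    obtain ⟨j₀, hj₀⟩ : ∃ j, n j ≠ 0 := Function.ne_iff.1 hn
    calc 2 ≤ 2 * n j₀ := by omega
      _ ≤ ∑ j, 2 * n j :=
        single_le_sum (f := fun j => 2 * n j) (fun j _ => Nat.zero_le _) (mem_univ j₀)
  obtain ⟨t, ht, hlt⟩ := exists_mul_rpow_mul_exp_lt_exp_mul_pow hC hM (Real.sqrt_nonneg N)
    (L * N) (abs_pos.2 hb) hk
  let z : EuclideanSpace ℂ (Fin N) := WithLp.toLp 2 fun j => (t : ℂ) * w j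
  have hz : ∀ j, ‖z j‖ = t := fun j => by simp [z, hw, abs_of_nonneg ht]
  have hF : -(b : ℂ) * ∏ j, z j ^ (2 * n j) = ((|b| * t ^ ∑ j, 2 * n j : ℝ) : ℂ) := by
    simp only [z, mul_pow, prod_mul_distrib, prod_pow_eq_pow_sum, hwprod]
    have hb' : (b : ℂ) ≠ 0 := Complex.ofReal_ne_zero.2 hb
    push_cast
    field_simp
  have him : ∑ j, |(z j).im| ≤ N * t := by
    calc ∑ j, |(z j).im| ≤ ∑ j, ‖z j‖ := sum_le_sum fun j _ => Complex.abs_im_le_norm _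
      _ = N * t := by simp [hz]
  refine ⟨z, lt_of_le_of_lt ?_ (hlt.trans_eq ?_)⟩
  · rw [EuclideanSpace.norm_eq_sqrt_card_mul ht hz, Fintype.card_fin, mul_assoc L]
    gcongr
  · rw [hF, Complex.norm_exp, Complex.ofReal_re]
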